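/- arXiv:1304.4685 — 2 statements merged into one kernel-verified Lean document; each statement's English description precedes it below -/
import Mathlib

section
/- Let θ ∈ (0,1), let (x,y,z,λ,γ) be a point in N₂(θ) with p=(y,z), ω=(λ,γ) and duality gap μ, and let (ẋ,ẏ,ż,λ̇,γ̇) be a first-derivative direction at this point, with ṗ=(ẏ,ż), ω̇=(λ̇,γ̇). Then: (i) ‖ṗ/p‖² + ‖ω̇/ω‖² ≤ 2n/(1−θ); (ii) ‖ṗ/p‖²·‖ω̇/ω‖² ≤ (n/(1−θ))²; (iii) 0 ≤ ṗᵀω̇/μ ≤ n(1+θ)/(1−θ). Here ṗ/p and ω̇/ω denote componentwise division. -/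
open scoped BigOperators

noncomputable section

/-- Euclidean dot product of two vectors. -/
def dotp {ι : Type*} [Fintype ι] (u v : ι → ℝ) : ℝ := ∑ i, u i * v i

/-- Euclidean norm of a vector. -/
def vecNorm {ι : Type*} [Fintype ι] (u : ι → ℝ) : ℝ := Real.sqrt (∑ i, (u i) ^ 2)

/-- Strict feasibility for the box-constrained QP KKT system. -/
def StrictlyFeasible {n : ℕ} (H : Matrix (Fin n) (Fin n) ℝ)
    (c x y z lam gam : Fin n → ℝ) : Prop :=
  H.mulVec x + c + lam - gam = 0 ∧
  x + y = (fun _ => 1) ∧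
  x - z = (fun _ => -1) ∧
  (∀ i, 0 < y i) ∧ (∀ i, 0 < z i) ∧ (∀ i, 0 < lam i) ∧ (∀ i, 0 < gam i)

/-- The central-path neighborhood `N₂(θ)`. -/
def N2 {n : ℕ} (H : Matrix (Fin n) (Fin n) ℝ) (c : Fin n → ℝ) (θ : ℝ)
    (x y z lam gam : Fin n → ℝ) : Prop :=
  StrictlyFeasible H c x y z lam gam ∧
  vecNorm (Sum.elim y z * Sum.elim lam gam
      - fun _ => dotp (Sum.elim y z) (Sum.elim lam gam) / (2 * (n : ℝ)))
    ≤ θ * (dotp (Sum.elim y z) (Sum.elim lam gam) / (2 * (n : ℝ)))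

/-- First-derivative direction of the arc at a point `(x,y,z,λ,γ)`. -/
def FirstDir {n : ℕ} (H : Matrix (Fin n) (Fin n) ℝ)
    (y z lam gam xd yd zd ld gd : Fin n → ℝ) : Prop :=
  H.mulVec xd + ld - gd = 0 ∧ yd = -xd ∧ zd = xd ∧
  lam * yd + y * ld = lam * y ∧ gam * zd + z * gd = gam * z

/-- Second-derivative direction of the arc at a point `(x,y,z,λ,γ)`. -/
def SecondDir {n : ℕ} (H : Matrix (Fin n) (Fin n) ℝ)
    (y z lam gam yd zd ld gd xdd ydd zdd ldd gdd : Fin n → ℝ) : Prop :=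
  H.mulVec xdd + ldd - gdd = 0 ∧ ydd = -xdd ∧ zdd = xdd ∧
  lam * ydd + y * ldd = (-2 : ℝ) • (ld * yd) ∧
  gam * zdd + z * gdd = (-2 : ℝ) • (gd * zd)

/-- The ellipse (arc) approximation point: `v(α) = v - v̇·sin α + v̈·(1 - cos α)`. -/
def arc {n : ℕ} (v vd vdd : Fin n → ℝ) (α : ℝ) : Fin n → ℝ :=
  v - Real.sin α • vd + (1 - Real.cos α) • vdd

/-- Corrector (centering) direction at a point `(x,y,z,λ,γ)` with target `μ`. -/
def CorrDir {n : ℕ} (H : Matrix (Fin n) (Fin n) ℝ)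
    (y z lam gam dx dy dz dl dg : Fin n → ℝ) (mu : ℝ) : Prop :=
  H.mulVec dx + dl - dg = 0 ∧ dy = -dx ∧ dz = dx ∧
  lam * dy + y * dl = (fun _ => mu) - lam * y ∧
  gam * dz + z * dg = (fun _ => mu) - gam * z

/-! With `a = ṗ/p`, `b = ω̇/ω` and `s = p ∘ ω`, the complementarity rows of the derivative system
give `aᵢ + bᵢ = 1`, hence `aᵢbᵢ ≤ 1/4` and `‖a‖² + ‖b‖² = 2n − 2∑ aᵢbᵢ`. Positive semidefiniteness
of `H` gives `∑ aᵢbᵢsᵢ = ṗᵀω̇ = ẋᵀHẋ ≥ 0`, and `N₂(θ)` confines each `sᵢ` to `[(1−θ)μ, (1+θ)μ]`.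
As `aᵢbᵢ ≤ 1/4`, the termwise bound `aᵢbᵢsᵢ ≤ (1−θ)μ·aᵢbᵢ + θμ/2` turns `ṗᵀω̇ ≥ 0` into
`−(1−θ)∑ aᵢbᵢ ≤ nθ`, which is (i); (ii) is AM–GM applied to (i), and (iii) follows from
`aᵢbᵢsᵢ ≤ (1+θ)μ/4`. -/

lemma vecNorm_sq {ι : Type*} [Fintype ι] (u : ι → ℝ) : vecNorm u ^ 2 = ∑ i, u i ^ 2 :=
  Real.sq_sqrt (Finset.sum_nonneg fun i _ => sq_nonneg (u i))

lemma abs_apply_le_vecNorm {ι : Type*} [Fintype ι] (u : ι → ℝ) (i : ι) : |u i| ≤ vecNorm u := by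
  rw [vecNorm, ← Real.sqrt_sq_eq_abs]
  exact Real.sqrt_le_sqrt (Finset.single_le_sum (fun j _ => sq_nonneg (u j)) (Finset.mem_univ i))

lemma mem_Icc_of_vecNorm_sub_const_le {ι : Type*} [Fintype ι] {v : ι → ℝ} {θ μ : ℝ}
    (h : vecNorm (v - fun _ => μ) ≤ θ * μ) (i : ι) :
    v i ∈ Set.Icc ((1 - θ) * μ) ((1 + θ) * μ) := by
  have hi := abs_le.mp ((abs_apply_le_vecNorm _ i).trans h)
  simp only [Pi.sub_apply] at hi
  constructor <;> linarith [hi.1, hi.2]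

lemma dotp_sum_elim {ι κ : Type*} [Fintype ι] [Fintype κ] (u v : ι → ℝ) (u' v' : κ → ℝ) :
    dotp (Sum.elim u u') (Sum.elim v v') = dotp u v + dotp u' v' :=
  Fintype.sum_sum_type _

lemma dotp_pos {ι : Type*} [Fintype ι] [Nonempty ι] {u v : ι → ℝ} (hu : ∀ i, 0 < u i)
    (hv : ∀ i, 0 < v i) : 0 < dotp u v :=
  Finset.sum_pos (fun i _ => mul_pos (hu i) (hv i)) Finset.univ_nonempty

lemma dotp_eq_sum_div_mul_div {ι : Type*} [Fintype ι] {p w : ι → ℝ} (hp : ∀ i, p i ≠ 0)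
    (hw : ∀ i, w i ≠ 0) (pd wd : ι → ℝ) :
    dotp pd wd = ∑ i, (pd / p) i * (wd / w) i * (p * w) i := by
  refine Finset.sum_congr rfl fun i _ => ?_
  simp only [Pi.div_apply, Pi.mul_apply]
  field_simp [hp i, hw i]

lemma div_add_div_eq_one_of_mul_add_mul_eq {y l yd ld : ℝ} (hy : y ≠ 0) (hl : l ≠ 0)
    (h : l * yd + y * ld = l * y) : yd / y + ld / l = 1 := by
  field_simp
  linarith

lemma mul_le_sq_of_add_le_two_mul {a b c : ℝ} (ha : 0 ≤ a) (hb : 0 ≤ b) (h : a + b ≤ 2 * c) :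
    a * b ≤ c ^ 2 := by
  nlinarith [four_mul_le_sq_add a b]

lemma mul_le_quarter_of_add_eq_one {a b : ℝ} (h : a + b = 1) : a * b ≤ 1 / 4 := by
  nlinarith [four_mul_le_sq_add a b]

lemma mul_le_sub_mul_add_of_le_quarter {t s θ μ : ℝ} (ht : t ≤ 1 / 4) (hθ : 0 ≤ θ) (hμ : 0 ≤ μ)
    (hs : s ∈ Set.Icc ((1 - θ) * μ) ((1 + θ) * μ)) :
    t * s ≤ (1 - θ) * μ * t + θ * μ / 2 := by
  obtain ⟨hs₁, hs₂⟩ := hs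
  have hθμ : 0 ≤ θ * μ := mul_nonneg hθ hμ
  rcases le_total 0 t with ht₀ | ht₀
  · nlinarith [mul_le_mul_of_nonneg_left hs₂ ht₀]
  · nlinarith [mul_le_mul_of_nonpos_left hs₁ ht₀]

section WeightedProducts

variable {ι : Type*} [Fintype ι] {a b s : ι → ℝ}

theorem sum_sq_add_sum_sq_le_of_add_eq_one {θ μ : ℝ} (hθ : θ ∈ Set.Ico 0 1) (hμ : 0 < μ)
    (hab : ∀ i, a i + b i = 1) (hs : ∀ i, s i ∈ Set.Icc ((1 - θ) * μ) ((1 + θ) * μ))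
    (hsum : 0 ≤ ∑ i, a i * b i * s i) :
    ∑ i, a i ^ 2 + ∑ i, b i ^ 2 ≤ Fintype.card ι / (1 - θ) := by
  obtain ⟨hθ₀, hθ₁⟩ := hθ
  have hsq : ∑ i, a i ^ 2 + ∑ i, b i ^ 2 = Fintype.card ι - 2 * ∑ i, a i * b i := by
    rw [← Finset.sum_add_distrib, Finset.mul_sum, ← Finset.card_univ, ← nsmul_one,
      ← Finset.sum_const, ← Finset.sum_sub_distrib]
    refine Finset.sum_congr rfl fun i _ => ?_
    linear_combination (a i + b i + 1) * hab i
  have hweighted : 0 ≤ μ * ((1 - θ) * ∑ i, a i * b i + Fintype.card ι * θ / 2) := calc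
    0 ≤ ∑ i, a i * b i * s i := hsum
    _ ≤ ∑ i, ((1 - θ) * μ * (a i * b i) + θ * μ / 2) := Finset.sum_le_sum fun i _ =>
        mul_le_sub_mul_add_of_le_quarter (mul_le_quarter_of_add_eq_one (hab i)) hθ₀ hμ.le (hs i)
    _ = μ * ((1 - θ) * ∑ i, a i * b i + Fintype.card ι * θ / 2) := by
        rw [Finset.sum_add_distrib, ← Finset.mul_sum, Finset.sum_const, Finset.card_univ,
          nsmul_eq_mul]
        ring
  have := nonneg_of_mul_nonneg_right hweighted hμ
  rw [hsq, le_div_iff₀ (by linarith)]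
  nlinarith

theorem sum_mul_mul_le_of_add_eq_one {M : ℝ} (hab : ∀ i, a i + b i = 1)
    (hs : ∀ i, s i ∈ Set.Icc 0 M) : ∑ i, a i * b i * s i ≤ Fintype.card ι * M / 4 := calc
  ∑ i, a i * b i * s i ≤ ∑ _i : ι, M / 4 := Finset.sum_le_sum fun i _ => by
    obtain ⟨hs₀, hsM⟩ := hs i
    have := mul_le_quarter_of_add_eq_one (hab i)
    rcases le_total 0 (a i * b i) with h | h
    · nlinarith [mul_le_mul_of_nonneg_left hsM h]
    · nlinarith [mul_nonpos_of_nonpos_of_nonneg h hs₀]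
  _ = Fintype.card ι * M / 4 := by
    rw [Finset.sum_const, Finset.card_univ, nsmul_eq_mul]
    ring

end WeightedProducts

namespace FirstDir

variable {n : ℕ} {H : Matrix (Fin n) (Fin n) ℝ} {y z lam gam xd yd zd ld gd : Fin n → ℝ}

lemma div_add_div_eq_one (hfd : FirstDir H y z lam gam xd yd zd ld gd)
    (hp : ∀ i, Sum.elim y z i ≠ 0) (hw : ∀ i, Sum.elim lam gam i ≠ 0) (i : Fin n ⊕ Fin n) :
    (Sum.elim yd zd / Sum.elim y z) i + (Sum.elim ld gd / Sum.elim lam gam) i = 1 := by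
  obtain ⟨-, -, -, hyl, hzg⟩ := hfd
  rcases i with j | j
  · exact div_add_div_eq_one_of_mul_add_mul_eq (hp (.inl j)) (hw (.inl j)) (congrFun hyl j)
  · exact div_add_div_eq_one_of_mul_add_mul_eq (hp (.inr j)) (hw (.inr j)) (congrFun hzg j)

lemma dotp_nonneg (hH : H.PosSemidef) (hfd : FirstDir H y z lam gam xd yd zd ld gd) :
    0 ≤ dotp (Sum.elim yd zd) (Sum.elim ld gd) := by
  obtain ⟨hH', hyd, hzd, -, -⟩ := hfd
  subst yd zd
  have hgl : H.mulVec xd = gd - ld := by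
    rw [← sub_eq_zero, ← hH']
    abel
  have := hH.dotProduct_mulVec_nonneg xd
  rw [star_trivial, hgl] at this
  rw [dotp_sum_elim]
  refine this.trans_eq ?_
  simp only [dotp, dotProduct, Pi.neg_apply, Pi.sub_apply, mul_sub, neg_mul,
    Finset.sum_neg_distrib, Finset.sum_sub_distrib]
  ring

end FirstDir

/-- bounds on the scaled first derivatives:
`‖ṗ/p‖² + ‖ω̇/ω‖² ≤ 2n/(1−θ)`, `‖ṗ/p‖²·‖ω̇/ω‖² ≤ (n/(1−θ))²`,
`0 ≤ ṗᵀω̇/μ ≤ n(1+θ)/(1−θ)`. -/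
theorem stmt_5 {n : ℕ} (hn : 0 < n) (H : Matrix (Fin n) (Fin n) ℝ) (hH : H.PosDef)
    (c x y z lam gam : Fin n → ℝ)
    (θ : ℝ) (hθ : θ ∈ Set.Ioo (0 : ℝ) 1)
    (hN : N2 H c θ x y z lam gam)
    (xd yd zd ld gd : Fin n → ℝ)
    (hfd : FirstDir H y z lam gam xd yd zd ld gd)
    (p w pd wd : Fin n ⊕ Fin n → ℝ)
    (hp : p = Sum.elim y z) (hw : w = Sum.elim lam gam)
    (hpd : pd = Sum.elim yd zd) (hwd : wd = Sum.elim ld gd)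
    (μ : ℝ) (hμ : μ = dotp p w / (2 * (n : ℝ))) :
    (vecNorm (pd / p)) ^ 2 + (vecNorm (wd / w)) ^ 2 ≤ 2 * (n : ℝ) / (1 - θ) ∧
    (vecNorm (pd / p)) ^ 2 * (vecNorm (wd / w)) ^ 2 ≤ ((n : ℝ) / (1 - θ)) ^ 2 ∧
    0 ≤ dotp pd wd / μ ∧
    dotp pd wd / μ ≤ (n : ℝ) * (1 + θ) / (1 - θ) := by
  obtain ⟨hθ₀, hθ₁⟩ := hθ
  obtain ⟨⟨-, -, -, hy, hz, hl, hg⟩, hband⟩ := hN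
  subst hp hw hpd hwd
  rw [← hμ] at hband
  have : Nonempty (Fin n) := ⟨⟨0, hn⟩⟩
  have hp : ∀ i, 0 < Sum.elim y z i := Sum.forall.2 ⟨hy, hz⟩
  have hw : ∀ i, 0 < Sum.elim lam gam i := Sum.forall.2 ⟨hl, hg⟩
  have hμ₀ : 0 < μ := hμ ▸ div_pos (dotp_pos hp hw) (by positivity)
  have hs := mem_Icc_of_vecNorm_sub_const_le hband
  have hab := hfd.div_add_div_eq_one (fun i => (hp i).ne') (fun i => (hw i).ne')
  have hdot := dotp_eq_sum_div_mul_div (fun i => (hp i).ne') (fun i => (hw i).ne')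
    (Sum.elim yd zd) (Sum.elim ld gd)
  have hmono := hfd.dotp_nonneg hH.posSemidef
  have hcard : (Fintype.card (Fin n ⊕ Fin n) : ℝ) = 2 * n := by simp [two_mul]
  have hnorms := sum_sq_add_sum_sq_le_of_add_eq_one ⟨hθ₀.le, hθ₁⟩ hμ₀ hab hs (hdot ▸ hmono)
  rw [hcard, ← vecNorm_sq, ← vecNorm_sq] at hnorms
  refine ⟨hnorms, ?_, div_nonneg hmono hμ₀.le, ?_⟩
  · rw [mul_div_assoc] at hnorms
    exact mul_le_sq_of_add_le_two_mul (sq_nonneg _) (sq_nonneg _) hnorms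
  · rw [div_le_iff₀ hμ₀, hdot]
    calc _ ≤ Fintype.card (Fin n ⊕ Fin n) * ((1 + θ) * μ) / 4 :=
          sum_mul_mul_le_of_add_eq_one hab fun i => ⟨(mul_pos (hp i) (hw i)).le, (hs i).2⟩
      _ = n * (1 + θ) / 2 * μ := by rw [hcard]; ring
      _ ≤ n * (1 + θ) / (1 - θ) * μ := by
        gcongr
        linarith
end
end

section
/- Let θ = 0.19, let (x,y,z,λ,γ) ∈ N₂(θ) with duality gap μ, let first- and second-derivative directions be given, let α ∈ [0,π/2] with sinα = θ/√n, let (x(α),y(α),z(α),λ(α),γ(α)) be the arc point with gap μ(α), and let (Δx,Δy,Δz,Δλ,Δγ) be a corrector direction at the arc point. Set μ⁺ = (p(α)+Δp)ᵀ(ω(α)+Δω)/(2n). Then μ⁺ ≤ μ·(1 − 0.0185/√n); in particular μ⁺ < μ. -/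
open scoped BigOperators

noncomputable section

/-!
Write `p = (y, z)`, `w = (λ, γ)` and `D = diag (p / w) ^ (1/2)`. Expanding the product along the
arc with the derivative equations gives `p(α) ∘ w(α) = (1 - sin α) p ∘ w + r`, where `r` is made
of `ṗ ∘ ẇ`, `p̈ ∘ ẅ` and `ṗ ∘ ẅ + p̈ ∘ ẇ` with coefficients `(1 - cos α)²` and
`sin α (1 - cos α)`. Monotonicity of the KKT system (`H ⪰ 0`) gives `ṗᵀẇ, p̈ᵀẅ ≥ 0`, hence
`‖D⁻¹ṗ‖² + ‖Dẇ‖² ≤ 2nμ` and `‖D⁻¹p̈‖² + ‖Dẅ‖² = O(n²μ)`, and these bound the three products.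
As `1 - cos α ≤ sin² α = 0.0361 / n`, `‖r‖ ≤ 0.04 μ`: the arc point lies in `N₂(0.23)` and its
gap is `(1 - sin α) μ + O(μ / √n)`. The corrector keeps the gap of the arc point and adds
`ΔpᵀΔw / (2n) = O(μ / n)` to it, and `0.19 / √n` beats both error terms.
-/

open Finset Real

section Euclidean

variable {ι : Type*} [Fintype ι]

theorem vecNorm_eq_norm (u : ι → ℝ) : vecNorm u = ‖(WithLp.toLp 2 u : EuclideanSpace ℝ ι)‖ := by
  simp [vecNorm, EuclideanSpace.norm_eq]

theorem sq_vecNorm (u : ι → ℝ) : vecNorm u ^ 2 = ∑ i, u i ^ 2 :=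
  sq_sqrt (sum_nonneg fun i _ => sq_nonneg (u i))

theorem vecNorm_nonneg (u : ι → ℝ) : 0 ≤ vecNorm u := sqrt_nonneg _

theorem vecNorm_add_le (u v : ι → ℝ) : vecNorm (u + v) ≤ vecNorm u + vecNorm v := by
  simpa only [vecNorm_eq_norm, WithLp.toLp_add] using norm_add_le _ _

theorem vecNorm_sub_le (u v : ι → ℝ) : vecNorm (u - v) ≤ vecNorm u + vecNorm v := by
  simpa only [vecNorm_eq_norm, WithLp.toLp_sub] using norm_sub_le _ _

theorem vecNorm_smul (a : ℝ) (u : ι → ℝ) : vecNorm (a • u) = |a| * vecNorm u := by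
  simp only [vecNorm_eq_norm, WithLp.toLp_smul, norm_smul, Real.norm_eq_abs]

theorem vecNorm_le_of_sum_sq_le {u : ι → ℝ} {r : ℝ} (hr : 0 ≤ r) (h : ∑ i, u i ^ 2 ≤ r ^ 2) :
    vecNorm u ≤ r :=
  (sqrt_le_sqrt h).trans_eq (sqrt_sq hr)

theorem abs_le_vecNorm (u : ι → ℝ) (i : ι) : |u i| ≤ vecNorm u :=
  abs_le_sqrt (single_le_sum (f := fun j => u j ^ 2) (fun j _ => sq_nonneg (u j)) (mem_univ i))

theorem sub_le_of_vecNorm_sub_const_le {q : ι → ℝ} {m r : ℝ}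
    (h : vecNorm (q - fun _ => m) ≤ r) (i : ι) : m - r ≤ q i := by
  have := (abs_le_vecNorm (q - fun _ => m) i).trans h
  rw [Pi.sub_apply, abs_le] at this
  linarith [this.1]

theorem sum_sq_sub_const_eq {q : ι → ℝ} {m : ℝ} (hm : ∑ i, q i = Fintype.card ι * m) :
    ∑ i, (q i - m) ^ 2 = ∑ i, q i ^ 2 - Fintype.card ι * m ^ 2 := by
  simp only [sub_sq, sum_add_distrib, sum_sub_distrib, ← sum_mul, ← mul_sum, hm, sum_const,
    card_univ, nsmul_eq_mul]
  ring

theorem vecNorm_sub_const_le {q : ι → ℝ} {m : ℝ} (hm : ∑ i, q i = Fintype.card ι * m) :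
    vecNorm (q - fun _ => m) ≤ vecNorm q := by
  refine sqrt_le_sqrt ?_
  simp only [Pi.sub_apply, sum_sq_sub_const_eq hm]
  nlinarith [(Nat.cast_nonneg (Fintype.card ι) : (0 : ℝ) ≤ _), sq_nonneg m]

theorem card_mul_sq_le_sq_vecNorm {q : ι → ℝ} {m : ℝ} (hm : ∑ i, q i = Fintype.card ι * m) :
    Fintype.card ι * m ^ 2 ≤ vecNorm q ^ 2 := by
  rw [sq_vecNorm]
  linarith [sum_sq_sub_const_eq hm, sum_nonneg fun i (_ : i ∈ univ) => sq_nonneg (q i - m)]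

theorem sum_eq_card_mul_of_smul_add {q r : ι → ℝ} {a m m' : ℝ}
    (hm : ∑ i, q i = Fintype.card ι * m) (hm' : ∑ i, (a • q + r) i = Fintype.card ι * m') :
    ∑ i, r i = Fintype.card ι * (m' - a * m) := by
  simp only [Pi.add_apply, Pi.smul_apply, smul_eq_mul, sum_add_distrib, ← mul_sum, hm] at hm'
  linear_combination hm'

theorem vecNorm_smul_add_sub_const_le {q r : ι → ℝ} {a m m' : ℝ}
    (hm : ∑ i, q i = Fintype.card ι * m) (hm' : ∑ i, (a • q + r) i = Fintype.card ι * m') :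
    vecNorm (a • q + r - fun _ => m') ≤ |a| * vecNorm (q - fun _ => m) + vecNorm r := by
  have hsplit : a • q + r - (fun _ => m') = a • (q - fun _ => m) + (r - fun _ => m' - a * m) := by
    ext i
    simp only [Pi.add_apply, Pi.sub_apply, Pi.smul_apply, smul_eq_mul]
    ring
  rw [hsplit, ← vecNorm_smul]
  exact (vecNorm_add_le _ _).trans
    (add_le_add_right (vecNorm_sub_const_le (sum_eq_card_mul_of_smul_add hm hm')) _)

end Euclidean

section Scaling

variable {ι : Type*} [Fintype ι]

theorem sum_mul_le_sum_mul_sum {f g : ι → ℝ} (hf : ∀ i, 0 ≤ f i) (hg : ∀ i, 0 ≤ g i) :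
    ∑ i, f i * g i ≤ (∑ i, f i) * ∑ i, g i := by
  rw [sum_mul]
  exact sum_le_sum fun i _ =>
    mul_le_mul_of_nonneg_left (single_le_sum (fun j _ => hg j) (mem_univ i)) (hf i)

/-- `‖D⁻¹a‖² + ‖Db‖²` for the primal–dual scaling `D = diag (p / w) ^ (1/2)`. -/
def scaledNormSq (p w a b : ι → ℝ) : ℝ := ∑ i, a i ^ 2 * w i / p i + ∑ i, b i ^ 2 * p i / w i

variable {p w : ι → ℝ}

theorem scaledNormSq_nonneg (hp : ∀ i, 0 < p i) (hw : ∀ i, 0 < w i) (a b : ι → ℝ) :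
    0 ≤ scaledNormSq p w a b :=
  add_nonneg (sum_nonneg fun i _ => by have := hp i; have := hw i; positivity)
    (sum_nonneg fun i _ => by have := hp i; have := hw i; positivity)

theorem scaledNormSq_add_two_mul_dotp (hp : ∀ i, 0 < p i) (hw : ∀ i, 0 < w i) (a b : ι → ℝ) :
    scaledNormSq p w a b + 2 * dotp a b = ∑ i, (w i * a i + p i * b i) ^ 2 / (p i * w i) := by
  rw [scaledNormSq, dotp, mul_sum, ← sum_add_distrib, ← sum_add_distrib]
  refine sum_congr rfl fun i _ => ?_
  field_simp [(hp i).ne', (hw i).ne']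
  ring

theorem sum_sq_mul_le (hp : ∀ i, 0 < p i) (hw : ∀ i, 0 < w i) (a b : ι → ℝ) :
    ∑ i, (a i * b i) ^ 2 ≤ (∑ i, a i ^ 2 * w i / p i) * ∑ i, b i ^ 2 * p i / w i := by
  have hterm : ∀ i, (a i * b i) ^ 2 = a i ^ 2 * w i / p i * (b i ^ 2 * p i / w i) := by
    intro i
    field_simp [(hp i).ne', (hw i).ne']
  simp only [hterm]
  exact sum_mul_le_sum_mul_sum (fun i => by have := hp i; have := hw i; positivity)
    (fun i => by have := hp i; have := hw i; positivity)

theorem vecNorm_mul_le_scaledNormSq (hp : ∀ i, 0 < p i) (hw : ∀ i, 0 < w i) (a b : ι → ℝ) :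
    vecNorm (a * b) ≤ scaledNormSq p w a b / 2 := by
  refine vecNorm_le_of_sum_sq_le (by linarith [scaledNormSq_nonneg hp hw a b]) ?_
  simp only [Pi.mul_apply, scaledNormSq]
  nlinarith [sum_sq_mul_le hp hw a b,
    sq_nonneg (∑ i, a i ^ 2 * w i / p i - ∑ i, b i ^ 2 * p i / w i)]

theorem sq_vecNorm_mul_add_mul_le (hp : ∀ i, 0 < p i) (hw : ∀ i, 0 < w i) (a b a' b' : ι → ℝ) :
    vecNorm (a * b' + a' * b) ^ 2 ≤ 2 * scaledNormSq p w a b * scaledNormSq p w a' b' := by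
  have hnonneg : ∀ u : ι → ℝ, 0 ≤ ∑ i, u i ^ 2 * w i / p i ∧ 0 ≤ ∑ i, u i ^ 2 * p i / w i :=
    fun u => ⟨sum_nonneg fun i _ => by have := hp i; have := hw i; positivity,
      sum_nonneg fun i _ => by have := hp i; have := hw i; positivity⟩
  have hsplit : ∑ i, (a i * b' i + a' i * b i) ^ 2
      ≤ 2 * ∑ i, (a i * b' i) ^ 2 + 2 * ∑ i, (a' i * b i) ^ 2 := by
    rw [mul_sum, mul_sum, ← sum_add_distrib]
    exact sum_le_sum fun i _ => by nlinarith [sq_nonneg (a i * b' i - a' i * b i)]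
  rw [sq_vecNorm]
  simp only [Pi.add_apply, Pi.mul_apply, scaledNormSq]
  nlinarith [sum_sq_mul_le hp hw a b', sum_sq_mul_le hp hw a' b, hnonneg a, hnonneg b,
    hnonneg a', hnonneg b', mul_nonneg (hnonneg a).1 (hnonneg a').1,
    mul_nonneg (hnonneg b).2 (hnonneg b').2]

end Scaling

section Corrector

variable {ι : Type*} {p w dp dw : ι → ℝ} {m : ℝ}

theorem add_mul_add_of_corrector (h : w * dp + p * dw = (fun _ => m) - p * w) :
    (p + dp) * (w + dw) = (fun _ => m) + dp * dw := by
  ext i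
  have := congrFun h i
  simp only [Pi.add_apply, Pi.mul_apply, Pi.sub_apply] at this ⊢
  linear_combination this

theorem four_mul_dotp_le_of_corrector [Fintype ι] {β : ℝ} (hβ : 0 ≤ β)
    (hlow : ∀ i, β ≤ p i * w i) (h : w * dp + p * dw = (fun _ => m) - p * w) :
    4 * β * dotp dp dw ≤ vecNorm (p * w - fun _ => m) ^ 2 := by
  rw [sq_vecNorm, dotp, mul_sum]
  refine sum_le_sum fun i _ => ?_
  have hi := congrFun h i
  simp only [Pi.add_apply, Pi.mul_apply, Pi.sub_apply] at hi ⊢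
  have hsq : (p i * w i - m) ^ 2 = (w i * dp i + p i * dw i) ^ 2 := by rw [hi]; ring
  rcases le_or_gt (dp i * dw i) 0 with hneg | hpos
  · nlinarith [sq_nonneg (p i * w i - m)]
  · nlinarith [sq_nonneg (w i * dp i - p i * dw i), hlow i]

end Corrector

theorem one_sub_cos_le_sin_sq {α : ℝ} (hcos : 0 ≤ cos α) : 1 - cos α ≤ sin α ^ 2 := by
  nlinarith [cos_le_one α, sin_sq_add_cos_sq α]

/-- The remainder has this shape because `sin² α - 2 (1 - cos α) = -(1 - cos α)²`. -/
theorem arc_mul_arc {ι : Type*} {p w pd wd pdd wdd : ι → ℝ} (hfirst : w * pd + p * wd = p * w)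
    (hsecond : w * pdd + p * wdd = (-2 : ℝ) • (pd * wd)) (α : ℝ) :
    (p - sin α • pd + (1 - cos α) • pdd) * (w - sin α • wd + (1 - cos α) • wdd)
      = (1 - sin α) • (p * w) + ((1 - cos α) ^ 2 • (pdd * wdd - pd * wd)
        - (sin α * (1 - cos α)) • (pd * wdd + pdd * wd)) := by
  ext i
  have h1 := congrFun hfirst i
  have h2 := congrFun hsecond i
  simp only [Pi.add_apply, Pi.sub_apply, Pi.mul_apply, Pi.smul_apply, smul_eq_mul] at h1 h2 ⊢
  linear_combination (-sin α) * h1 + (1 - cos α) * h2 + (pd i * wd i) * sin_sq_add_cos_sq α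

section ArcStep

variable {ι : Type*} [Fintype ι]

/-- An iterate `(p, w) ∈ N₂(0.19)` with gap `μ` and the first and second derivatives of the arc
through it, in the stacked variables `p = (y, z)`, `w = (λ, γ)` of dimension `2 N`. -/
structure ArcData (N : ℕ) (p w pd wd pdd wdd : ι → ℝ) (μ : ℝ) : Prop where
  N_pos : 0 < N
  card_eq : Fintype.card ι = 2 * N
  p_pos : ∀ i, 0 < p i
  w_pos : ∀ i, 0 < w i
  μ_pos : 0 < μ
  sum_mul_eq : ∑ i, p i * w i = 2 * N * μ
  near_central : vecNorm (p * w - fun _ => μ) ≤ 0.19 * μ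
  first : w * pd + p * wd = p * w
  second : w * pdd + p * wdd = (-2 : ℝ) • (pd * wd)
  dotp_first_nonneg : 0 ≤ dotp pd wd
  dotp_second_nonneg : 0 ≤ dotp pdd wdd

namespace ArcData

variable {N : ℕ} {p w pd wd pdd wdd : ι → ℝ} {μ : ℝ}

theorem le_mul_apply (h : ArcData N p w pd wd pdd wdd μ) (i : ι) : 0.81 * μ ≤ p i * w i := by
  have := sub_le_of_vecNorm_sub_const_le h.near_central i
  simp only [Pi.mul_apply] at this
  linarith

theorem scaledNormSq_first_le (h : ArcData N p w pd wd pdd wdd μ) :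
    scaledNormSq p w pd wd ≤ 2 * N * μ := by
  have hid := scaledNormSq_add_two_mul_dotp h.p_pos h.w_pos pd wd
  have hsum : ∑ i, (w i * pd i + p i * wd i) ^ 2 / (p i * w i) = 2 * N * μ := by
    rw [← h.sum_mul_eq]
    refine sum_congr rfl fun i _ => ?_
    have hi := congrFun h.first i
    simp only [Pi.add_apply, Pi.mul_apply] at hi
    rw [hi, sq, mul_self_div_self]
  linarith [h.dotp_first_nonneg]

theorem vecNorm_first_le (h : ArcData N p w pd wd pdd wdd μ) : vecNorm (pd * wd) ≤ N * μ :=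
  (vecNorm_mul_le_scaledNormSq h.p_pos h.w_pos pd wd).trans (by linarith [h.scaledNormSq_first_le])

/-- The second-order equation makes `‖D⁻¹p̈ + Dẅ‖² = 4 ∑ (ṗᵢẇᵢ)² / (pᵢwᵢ)`, and `pᵢwᵢ ≥ 0.81 μ`
in the neighbourhood. -/
theorem scaledNormSq_second_le (h : ArcData N p w pd wd pdd wdd μ) :
    scaledNormSq p w pdd wdd ≤ 4 / 0.81 * N ^ 2 * μ := by
  have hid := scaledNormSq_add_two_mul_dotp h.p_pos h.w_pos pdd wdd
  have hμ := h.μ_pos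
  have hsum : ∑ i, (w i * pdd i + p i * wdd i) ^ 2 / (p i * w i)
      ≤ 4 * vecNorm (pd * wd) ^ 2 / (0.81 * μ) := by
    rw [sq_vecNorm, mul_sum, sum_div]
    refine sum_le_sum fun i _ => ?_
    have hi := congrFun h.second i
    simp only [Pi.add_apply, Pi.mul_apply, Pi.smul_apply, smul_eq_mul] at hi ⊢
    rw [hi, show (-2 * (pd i * wd i)) ^ 2 = 4 * (pd i * wd i) ^ 2 by ring]
    exact div_le_div_of_nonneg_left (by positivity) (by positivity) (h.le_mul_apply i)
  have hfirst : vecNorm (pd * wd) ^ 2 ≤ (N * μ) ^ 2 :=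
    pow_le_pow_left₀ (vecNorm_nonneg _) h.vecNorm_first_le 2
  have hbound : 4 * vecNorm (pd * wd) ^ 2 / (0.81 * μ) ≤ 4 / 0.81 * N ^ 2 * μ := by
    rw [div_le_iff₀ (by positivity)]
    nlinarith
  linarith [h.dotp_second_nonneg]

theorem vecNorm_second_le (h : ArcData N p w pd wd pdd wdd μ) :
    vecNorm (pdd * wdd) ≤ 2 / 0.81 * N ^ 2 * μ :=
  (vecNorm_mul_le_scaledNormSq h.p_pos h.w_pos pdd wdd).trans
    (by linarith [h.scaledNormSq_second_le])

theorem sq_vecNorm_cross_le (h : ArcData N p w pd wd pdd wdd μ) :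
    vecNorm (pd * wdd + pdd * wd) ^ 2 ≤ 16 / 0.81 * N ^ 3 * μ ^ 2 := by
  have h1 := h.scaledNormSq_first_le
  have h2 := h.scaledNormSq_second_le
  calc vecNorm (pd * wdd + pdd * wd) ^ 2
      ≤ 2 * scaledNormSq p w pd wd * scaledNormSq p w pdd wdd :=
        sq_vecNorm_mul_add_mul_le h.p_pos h.w_pos pd wd pdd wdd
    _ ≤ 2 * (2 * N * μ) * (4 / 0.81 * N ^ 2 * μ) := by
        gcongr
        exacts [scaledNormSq_nonneg h.p_pos h.w_pos pdd wdd, by have := h.μ_pos; positivity]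
    _ = 16 / 0.81 * N ^ 3 * μ ^ 2 := by ring

theorem vecNorm_arc_remainder_le (h : ArcData N p w pd wd pdd wdd μ) {α : ℝ}
    (hcos : 0 ≤ cos α) (hsin : sin α = 0.19 / √N) :
    vecNorm ((1 - cos α) ^ 2 • (pdd * wdd - pd * wd)
      - (sin α * (1 - cos α)) • (pd * wdd + pdd * wd)) ≤ 0.04 * μ := by
  have hμ := h.μ_pos
  have hN : (1 : ℝ) ≤ N := Nat.one_le_cast.mpr h.N_pos
  have hsN : sin α ^ 2 * N = 0.0361 := by
    rw [hsin, div_pow, sq_sqrt (by positivity)]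
    field_simp
    norm_num
  have hs : 0 ≤ sin α := by rw [hsin]; positivity
  have hτ : 0 ≤ 1 - cos α := sub_nonneg.mpr (cos_le_one α)
  have hτN : (1 - cos α) * N ≤ 0.0361 := by nlinarith [one_sub_cos_le_sin_sq hcos]
  have hX1 := h.vecNorm_first_le
  have hX3 := h.vecNorm_second_le
  have hX2 : sin α * (1 - cos α) * vecNorm (pd * wdd + pdd * wd) ≤ 0.031 * μ := by
    refine (sq_le_sq₀ (by positivity [vecNorm_nonneg (pd * wdd + pdd * wd)]) (by positivity)).mp ?_
    calc (sin α * (1 - cos α) * vecNorm (pd * wdd + pdd * wd)) ^ 2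
        ≤ (sin α * (1 - cos α)) ^ 2 * (16 / 0.81 * N ^ 3 * μ ^ 2) := by
          rw [mul_pow]; gcongr; exact h.sq_vecNorm_cross_le
      _ = 16 / 0.81 * (sin α ^ 2 * N) * ((1 - cos α) * N) ^ 2 * μ ^ 2 := by ring
      _ ≤ 16 / 0.81 * 0.0361 * 0.0361 ^ 2 * μ ^ 2 := by rw [hsN]; gcongr
      _ ≤ (0.031 * μ) ^ 2 := by nlinarith
  calc _ ≤ (1 - cos α) ^ 2 * (vecNorm (pdd * wdd) + vecNorm (pd * wd))
        + sin α * (1 - cos α) * vecNorm (pd * wdd + pdd * wd) := by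
        refine (vecNorm_sub_le _ _).trans ?_
        rw [vecNorm_smul, vecNorm_smul, abs_of_nonneg (by positivity),
          abs_of_nonneg (by positivity)]
        gcongr
        exact vecNorm_sub_le _ _
    _ ≤ (1 - cos α) ^ 2 * (2 / 0.81 * N ^ 2 * μ + N ^ 2 * μ) + 0.031 * μ := by
        gcongr
        have hNμ : (0 : ℝ) ≤ N * μ := by positivity
        exact hX1.trans (by nlinarith [mul_le_mul_of_nonneg_right hN hNμ])
    _ = ((1 - cos α) * N) ^ 2 * (2 / 0.81 + 1) * μ + 0.031 * μ := by ring
    _ ≤ 0.0361 ^ 2 * (2 / 0.81 + 1) * μ + 0.031 * μ := by gcongr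
    _ ≤ 0.04 * μ := by nlinarith

theorem arc_point_near_central (h : ArcData N p w pd wd pdd wdd μ) {α : ℝ}
    (hcos : 0 ≤ cos α) (hsin : sin α = 0.19 / √N) {pA wA : ι → ℝ} {μA : ℝ}
    (hpA : pA = p - sin α • pd + (1 - cos α) • pdd)
    (hwA : wA = w - sin α • wd + (1 - cos α) • wdd) (hμA : ∑ i, pA i * wA i = 2 * N * μA) :
    vecNorm (pA * wA - fun _ => μA) ≤ 0.23 * μ ∧ |μA - (1 - sin α) * μ| * √N ≤ 0.03 * μ := by
  have hμ := h.μ_pos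
  have hN : (1 : ℝ) ≤ N := Nat.one_le_cast.mpr h.N_pos
  have hcard : (Fintype.card ι : ℝ) = 2 * N := by rw [h.card_eq]; push_cast; ring
  have hprod := arc_mul_arc h.first h.second α
  rw [← hpA, ← hwA] at hprod
  have hpw : ∑ i, (p * w) i = Fintype.card ι * μ := by
    simpa only [hcard, Pi.mul_apply] using h.sum_mul_eq
  have hpwA : ∑ i, ((1 - sin α) • (p * w) + ((1 - cos α) ^ 2 • (pdd * wdd - pd * wd)
      - (sin α * (1 - cos α)) • (pd * wdd + pdd * wd))) i = Fintype.card ι * μA := by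
    rw [← hprod]
    simpa only [hcard, Pi.mul_apply] using hμA
  have hr := h.vecNorm_arc_remainder_le hcos hsin
  have hs0 : 0 ≤ sin α := by rw [hsin]; positivity
  have hs1 : sin α ≤ 0.19 := by
    rw [hsin, div_le_iff₀ (by positivity)]
    nlinarith [one_le_sqrt.mpr hN]
  constructor
  · have habs : |1 - sin α| ≤ 1 := abs_le.mpr ⟨by linarith, by linarith⟩
    have := mul_le_mul habs h.near_central (vecNorm_nonneg _) zero_le_one
    rw [hprod]
    linarith [vecNorm_smul_add_sub_const_le hpw hpwA]
  · refine (sq_le_sq₀ (by positivity) (by positivity)).mp ?_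
    rw [mul_pow, sq_abs, sq_sqrt (by positivity)]
    have hmean := card_mul_sq_le_sq_vecNorm (sum_eq_card_mul_of_smul_add hpw hpwA)
    have hr2 : vecNorm _ ^ 2 ≤ (0.04 * μ) ^ 2 := pow_le_pow_left₀ (vecNorm_nonneg _) hr 2
    rw [hcard] at hmean
    nlinarith

theorem corrected_gap_le (h : ArcData N p w pd wd pdd wdd μ) {α : ℝ}
    (hcos : 0 ≤ cos α) (hsin : sin α = 0.19 / √N) {pA wA dp dw : ι → ℝ} {μA μP : ℝ}
    (hpA : pA = p - sin α • pd + (1 - cos α) • pdd)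
    (hwA : wA = w - sin α • wd + (1 - cos α) • wdd) (hμA : ∑ i, pA i * wA i = 2 * N * μA)
    (hcorr : wA * dp + pA * dw = (fun _ => μA) - pA * wA)
    (hμP : ∑ i, (pA i + dp i) * (wA i + dw i) = 2 * N * μP) :
    μP ≤ μ * (1 - 0.0185 / √N) := by
  obtain ⟨hdev, hmean⟩ := h.arc_point_near_central hcos hsin hpA hwA hμA
  have hμ := h.μ_pos
  have hN : (1 : ℝ) ≤ N := Nat.one_le_cast.mpr h.N_pos
  set σ := √(N : ℝ)
  have hσ1 : 1 ≤ σ := one_le_sqrt.mpr hN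
  have hσN : σ ≤ N := by nlinarith [sq_sqrt (by positivity : (0 : ℝ) ≤ N)]
  have hsσ : sin α * σ = 0.19 := by rw [hsin]; field_simp
  have hs0 : 0 ≤ sin α := by rw [hsin]; positivity
  have hδ : |μA - (1 - sin α) * μ| ≤ 0.03 * μ :=
    (le_mul_of_one_le_right (abs_nonneg _) hσ1).trans hmean
  have hδσ : (μA - (1 - sin α) * μ) * σ ≤ 0.03 * μ :=
    (mul_le_mul_of_nonneg_right (le_abs_self _) (by positivity)).trans hmean
  have hlow : ∀ i, 0.5 * μ ≤ pA i * wA i := fun i => by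
    have := sub_le_of_vecNorm_sub_const_le hdev i
    simp only [Pi.mul_apply] at this
    nlinarith [(abs_le.mp hδ).1, mul_le_mul_of_nonneg_left hσ1 (mul_nonneg hs0 hμ.le)]
  have hD := (four_mul_dotp_le_of_corrector (by positivity) hlow hcorr).trans
    (pow_le_pow_left₀ (vecNorm_nonneg _) hdev 2)
  have hpt : ∀ i, (pA i + dp i) * (wA i + dw i) = μA + dp i * dw i := fun i => by
    simpa only [Pi.add_apply, Pi.mul_apply] using congrFun (add_mul_add_of_corrector hcorr) i
  have hsum : 2 * N * μP = 2 * N * μA + dotp dp dw := by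
    rw [← hμP, sum_congr rfl fun i _ => hpt i, sum_add_distrib, sum_const, card_univ, h.card_eq,
      dotp, nsmul_eq_mul]
    push_cast
    ring
  have hDσ : dotp dp dw * σ ≤ 0.02645 * μ * N := by
    nlinarith [mul_le_mul_of_nonneg_left hσN (by positivity : (0 : ℝ) ≤ 0.02645 * μ)]
  have hsplit : 2 * N * (μP * σ) = 2 * N * ((μA - (1 - sin α) * μ) * σ)
      + 2 * N * (μ * σ - sin α * σ * μ) + dotp dp dw * σ := by
    linear_combination σ * hsum
  have hgap : 2 * N * (μP * σ) ≤ 2 * N * (μ * σ - 0.0185 * μ) := by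
    rw [hsplit, hsσ]
    nlinarith [mul_le_mul_of_nonneg_left hδσ (by positivity : (0 : ℝ) ≤ 2 * N)]
  have hPσ : μP * σ ≤ μ * σ - 0.0185 * μ := le_of_mul_le_mul_left hgap (by positivity)
  rw [show μ * (1 - 0.0185 / σ) = (μ * σ - 0.0185 * μ) / σ by field_simp,
    le_div_iff₀ (by positivity)]
  exact hPσ

end ArcData

end ArcStep

theorem dotp_elim_neg_nonneg {m : Type*} [Fintype m] {H : Matrix m m ℝ} (hH : H.PosSemidef)
    {v l g : m → ℝ} (h : H.mulVec v + l - g = 0) : 0 ≤ dotp (Sum.elim (-v) v) (Sum.elim l g) := by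
  obtain rfl : g = H.mulVec v + l := (sub_eq_zero.mp h).symm
  have := hH.dotProduct_mulVec_nonneg v
  simp only [star_trivial, dotProduct] at this
  simpa [dotp, Fintype.sum_sum_type, mul_add, sum_add_distrib] using this

theorem elim_arc {n : ℕ} (u v ud vd udd vdd : Fin n → ℝ) (α : ℝ) :
    Sum.elim (arc u ud udd α) (arc v vd vdd α)
      = Sum.elim u v - sin α • Sum.elim ud vd + (1 - cos α) • Sum.elim udd vdd := by
  ext (i | i) <;> rfl

theorem sum_mul_eq_of_eq_dotp_div {ι : Type*} [Fintype ι] {n : ℕ} (hn : 0 < n) {u v : ι → ℝ}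
    {μ : ℝ} (h : μ = dotp u v / (2 * n)) : ∑ i, u i * v i = 2 * n * μ := by
  rw [h, dotp]
  field_simp

theorem arcData_of_N2 {n : ℕ} (hn : 0 < n) {H : Matrix (Fin n) (Fin n) ℝ} (hH : H.PosSemidef)
    {c x y z lam gam : Fin n → ℝ} (hN : N2 H c 0.19 x y z lam gam) {μ : ℝ}
    (hμ : μ = dotp (Sum.elim y z) (Sum.elim lam gam) / (2 * (n : ℝ)))
    {xd yd zd ld gd : Fin n → ℝ} (hfd : FirstDir H y z lam gam xd yd zd ld gd)
    {xdd ydd zdd ldd gdd : Fin n → ℝ}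
    (hsd : SecondDir H y z lam gam yd zd ld gd xdd ydd zdd ldd gdd) :
    ArcData n (Sum.elim y z) (Sum.elim lam gam) (Sum.elim yd zd) (Sum.elim ld gd)
      (Sum.elim ydd zdd) (Sum.elim ldd gdd) μ := by
  obtain ⟨⟨-, -, -, hy, hz, hl, hg⟩, hnear⟩ := hN
  obtain ⟨hxd, rfl, rfl, hfirst₁, hfirst₂⟩ := hfd
  obtain ⟨hxdd, rfl, rfl, hsecond₁, hsecond₂⟩ := hsd
  have hp : ∀ i, 0 < Sum.elim y z i := Sum.forall.mpr ⟨hy, hz⟩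
  have hw : ∀ i, 0 < Sum.elim lam gam i := Sum.forall.mpr ⟨hl, hg⟩
  have hsum := sum_mul_eq_of_eq_dotp_div hn hμ
  have : Nonempty (Fin n ⊕ Fin n) := ⟨Sum.inl ⟨0, hn⟩⟩
  rw [← hμ] at hnear
  refine ⟨hn, by rw [Fintype.card_sum, Fintype.card_fin]; ring, hp, hw, ?_, hsum, hnear, ?_, ?_, dotp_elim_neg_nonneg hH hxd,
    dotp_elim_neg_nonneg hH hxdd⟩
  · have : 0 < ∑ i, Sum.elim y z i * Sum.elim lam gam i :=
      sum_pos (fun i _ => mul_pos (hp i) (hw i)) univ_nonempty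
    have : (0 : ℝ) < n := by exact_mod_cast hn
    nlinarith
  · ext (i | i)
    · simpa [mul_comm] using congrFun hfirst₁ i
    · simpa [mul_comm] using congrFun hfirst₂ i
  · ext (i | i)
    · simpa [mul_comm] using congrFun hsecond₁ i
    · simpa [mul_comm] using congrFun hsecond₂ i

/-- with `θ = 0.19` and `sin α = θ/√n`, the combined arc-search plus
corrector step reduces the duality gap: `μ⁺ ≤ μ(1 − 0.0185/√n) < μ`. -/
theorem stmt_16 {n : ℕ} (hn : 0 < n) (H : Matrix (Fin n) (Fin n) ℝ) (hH : H.PosDef)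
    (c x y z lam gam : Fin n → ℝ)
    (hN : N2 H c 0.19 x y z lam gam)
    (μ : ℝ)
    (hμ : μ = dotp (Sum.elim y z) (Sum.elim lam gam) / (2 * (n : ℝ)))
    (xd yd zd ld gd : Fin n → ℝ)
    (hfd : FirstDir H y z lam gam xd yd zd ld gd)
    (xdd ydd zdd ldd gdd : Fin n → ℝ)
    (hsd : SecondDir H y z lam gam yd zd ld gd xdd ydd zdd ldd gdd)
    (α : ℝ) (hα : α ∈ Set.Icc 0 (Real.pi / 2))
    (hsin : Real.sin α = 0.19 / Real.sqrt (n : ℝ))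
    (yA zA lA gA : Fin n → ℝ)
    (hyA : yA = arc y yd ydd α) (hzA : zA = arc z zd zdd α)
    (hlA : lA = arc lam ld ldd α) (hgA : gA = arc gam gd gdd α)
    (muA : ℝ)
    (hmuA : muA = dotp (Sum.elim yA zA) (Sum.elim lA gA) / (2 * (n : ℝ)))
    (dx dy dz dl dg : Fin n → ℝ)
    (hcd : CorrDir H yA zA lA gA dx dy dz dl dg muA)
    (muP : ℝ)
    (hmuP : muP = dotp (Sum.elim (yA + dy) (zA + dz)) (Sum.elim (lA + dl) (gA + dg))
        / (2 * (n : ℝ))) :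
    muP ≤ μ * (1 - 0.0185 / Real.sqrt (n : ℝ)) ∧ muP < μ := by
  have hdata := arcData_of_N2 hn hH.posSemidef hN hμ hfd hsd
  obtain ⟨-, -, -, hcorr₁, hcorr₂⟩ := hcd
  have hcos : 0 ≤ cos α := cos_nonneg_of_mem_Icc ⟨by linarith [hα.1, pi_pos], hα.2⟩
  have hcorr : Sum.elim lA gA * Sum.elim dy dz + Sum.elim yA zA * Sum.elim dl dg
      = (fun _ => muA) - Sum.elim yA zA * Sum.elim lA gA := by
    ext (i | i)
    · simpa [mul_comm] using congrFun hcorr₁ i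
    · simpa [mul_comm] using congrFun hcorr₂ i
  have hgap := hdata.corrected_gap_le hcos hsin (by rw [hyA, hzA, elim_arc])
    (by rw [hlA, hgA, elim_arc]) (sum_mul_eq_of_eq_dotp_div hn hmuA) hcorr
    (by simpa only [Sum.elim_add_add, Pi.add_apply] using sum_mul_eq_of_eq_dotp_div hn hmuP)
  refine ⟨hgap, hgap.trans_lt ?_⟩
  have := hdata.μ_pos
  have : 0 < 0.0185 / √(n : ℝ) := by positivity
  nlinarith

end
end
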